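/- arXiv:1910.10918 — 2 statements merged into one kernel-verified Lean document; each statement's English description precedes it below -/
import Mathlib

section
/- If c ∈ [1/2, 1) and P ∈ SO(3) preserves the cube C₀ = [-1,1]³, then the attractor A(c,P) is an imaginary cube of the cube C = (1/(1-c))·C₀. -/
/- STATEMENT 7: If `c ∈ [1/2, 1)` and `P ∈ SO(3)` preserves the cube `C₀ = [-1,1]³`,
then the attractor `A(c,P)` is an imaginary cube of `C = (1/(1-c)) • C₀`. -/

noncomputable section
open Matrix Pointwise

abbrev E3 := EuclideanSpace ℝ (Fin 3)

/-- The standard cube `C₀ = [-1,1]³`. -/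
def C0 : Set E3 := {x | ∀ i, x i ∈ Set.Icc (-1 : ℝ) 1}

/-- The cube `a • Q C₀ + w`. -/
def cubeImage (a : ℝ) (Q : Matrix (Fin 3) (Fin 3) ℝ) (w : E3) : Set E3 :=
  (fun x => a • Matrix.toEuclideanLin Q x + w) '' C0

/-- The plane parallel to the face of the cube `a Q C₀ + w` orthogonal to direction `Q eᵢ`:
the span of the images of the other two coordinate vectors. -/
def facePlane (Q : Matrix (Fin 3) (Fin 3) ℝ) (i : Fin 3) : Submodule ℝ E3 :=
  Submodule.span ℝ {y | ∃ j ≠ i, y = Matrix.toEuclideanLin Q (EuclideanSpace.single j 1)}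

/-- `A` is an imaginary cube of the cube with data `(a, Q, w)`: the three projections of `A`
in the face directions agree with those of the cube. -/
def IsImaginaryCubeData (A : Set E3) (a : ℝ) (Q : Matrix (Fin 3) (Fin 3) ℝ) (w : E3) : Prop :=
  ∀ i : Fin 3,
    (Submodule.orthogonalProjection (facePlane Q i)) '' A =
      (Submodule.orthogonalProjection (facePlane Q i)) '' (cubeImage a Q w)

/-- `A` is an imaginary cube of the set `C`. -/
def IsImaginaryCubeOf (A C : Set E3) : Prop :=
  ∃ (a : ℝ) (Q : Matrix (Fin 3) (Fin 3) ℝ) (w : E3),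
    0 < a ∧ Q ∈ Matrix.specialOrthogonalGroup (Fin 3) ℝ ∧ C = cubeImage a Q w ∧
      IsImaginaryCubeData A a Q w

/-- `A` is an imaginary cube. -/
def IsImaginaryCube (A : Set E3) : Prop := ∃ C : Set E3, IsImaginaryCubeOf A C

def vtx : Fin 4 → E3 :=
  ![!₂[1, -1, 1], !₂[-1, 1, 1], !₂[-1, -1, -1], !₂[1, 1, -1]]

def fmap (c : ℝ) (P : Matrix (Fin 3) (Fin 3) ℝ) (i : Fin 4) (x : E3) : E3 :=
  c • Matrix.toEuclideanLin P x + vtx i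

def IsAttractor (c : ℝ) (P : Matrix (Fin 3) (Fin 3) ℝ) (A : Set E3) : Prop :=
  A.Nonempty ∧ IsCompact A ∧ A = ⋃ i : Fin 4, fmap c P i '' A


/- Let `a = 1 / (1 - c)` and `Q = a • C₀`.  Every map `fₖ x = c P x + vₖ` sends `Q` into itself.
Since `P` is a signed permutation matrix, the projection `π_m` killing coordinate `m` satisfies
`π_m (P x) = P (π_{e m} x)`, hence `π_m A ⊇ c P (π_{e m} A) + π_m vₖ`.  The projected vertices
`π_m vₖ` are the four points `(±1, ±1)`, one in each quadrant of the plane, so for `c ≥ 1/2` the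
squares `c • π_m Q + π_m vₖ` cover `π_m Q = P (π_{e m} Q)`.  Both `A ⊆ Q` and `π_m Q ⊆ π_m A` then follow
from one contraction principle: if every point of `S i` is the image of a point of some `S j` under
a `K`-Lipschitz map sending `T j` into `T i`, with `K < 1`, then induction gives
`infDist z (T i) ≤ Kⁿ * diam (⋃ i, S i ∪ T i)` for `z ∈ S i` and all `n`. -/

open Metric Set
open scoped NNReal

theorem LipschitzWith.infDist_le_mul {X : Type*} [PseudoMetricSpace X] {K : ℝ≥0} {φ : X → X}
    (hφ : LipschitzWith K φ) {s t : Set X} (hst : MapsTo φ s t) (hs : s.Nonempty) (x : X) :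
    infDist (φ x) t ≤ K * infDist x s := by
  have : Nonempty s := hs.to_subtype
  rw [infDist_eq_iInf (s := s), Real.mul_iInf_of_nonneg K.coe_nonneg]
  exact le_ciInf fun y => (infDist_le_dist_of_mem (hst y.2)).trans (hφ.dist_le_mul x y)

theorem subset_of_contracting_cover {X ι : Type*} [PseudoMetricSpace X] {S T : ι → Set X}
    {K : ℝ≥0} (hK : K < 1) (hT : ∀ i, IsClosed (T i)) (hTne : ∀ i, (T i).Nonempty)
    (hbdd : Bornology.IsBounded (⋃ i, S i ∪ T i))
    (hcover : ∀ i, ∀ z ∈ S i, ∃ j, ∃ z' ∈ S j, ∃ φ : X → X,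
      LipschitzWith K φ ∧ MapsTo φ (T j) (T i) ∧ φ z' = z) (i : ι) :
    S i ⊆ T i := by
  set R := diam (⋃ i, S i ∪ T i)
  have hdecay : ∀ n : ℕ, ∀ i, ∀ z ∈ S i, infDist z (T i) ≤ K ^ n * R := by
    intro n
    induction n with
    | zero =>
      intro i z hz
      obtain ⟨t, ht⟩ := hTne i
      rw [pow_zero, one_mul]
      exact (infDist_le_dist_of_mem ht).trans (dist_le_diam_of_mem hbdd
        (mem_iUnion_of_mem i (Or.inl hz)) (mem_iUnion_of_mem i (Or.inr ht)))
    | succ n ih =>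
      intro i z hz
      obtain ⟨j, z', hz', φ, hφ, hmaps, rfl⟩ := hcover i z hz
      calc infDist (φ z') (T i) ≤ K * infDist z' (T j) := hφ.infDist_le_mul hmaps (hTne j) z'
        _ ≤ K * (K ^ n * R) := by gcongr; exact ih j z' hz'
        _ = K ^ (n + 1) * R := by ring
  intro z hz
  have hlim : Filter.Tendsto (fun n : ℕ => (K : ℝ) ^ n * R) Filter.atTop (nhds 0) := by
    simpa using (tendsto_pow_atTop_nhds_zero_of_lt_one K.coe_nonneg hK).mul_const R
  have hzero : infDist z (T i) ≤ 0 := ge_of_tendsto' hlim fun n => hdecay n i z hz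
  exact ((hT i).mem_iff_infDist_zero (hTne i)).2 (le_antisymm hzero infDist_nonneg)

lemma exists_abs_eq_one_of_sum_abs_le_one {ι : Type*} [Fintype ι] {r : ι → ℝ}
    (habs : ∑ j, |r j| ≤ 1) (hsq : ∑ j, r j ^ 2 = 1) :
    ∃ j, |r j| = 1 ∧ ∀ j' ≠ j, r j' = 0 := by
  have hle : ∀ j, |r j| ≤ 1 := fun j =>
    (Finset.single_le_sum (fun j _ => abs_nonneg (r j)) (Finset.mem_univ j)).trans habs
  have hterm : ∀ j, |r j| * (1 - |r j|) = 0 := by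
    have hsum : ∑ j, |r j| * (1 - |r j|) ≤ 0 := by
      simp only [mul_sub, mul_one, ← sq, sq_abs, Finset.sum_sub_distrib, hsq]
      linarith
    intro j
    refine (Finset.sum_eq_zero_iff_of_nonneg fun j _ => ?_).1
      (le_antisymm hsum (Finset.sum_nonneg fun j _ => ?_)) j (Finset.mem_univ j) <;>
    exact mul_nonneg (abs_nonneg _) (sub_nonneg.2 (hle j))
  have hone : ∀ j, r j ≠ 0 → |r j| = 1 := fun j hj => by
    have := hterm j
    rw [mul_eq_zero, abs_eq_zero, sub_eq_zero] at this
    exact (this.resolve_left hj).symm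
  obtain ⟨j, hj⟩ : ∃ j, r j ≠ 0 := by
    by_contra! h
    simp [h] at hsq
  refine ⟨j, hone j hj, fun j' hj' => by_contra fun hr => ?_⟩
  have := (Finset.add_le_sum (fun j _ => abs_nonneg (r j)) (Finset.mem_univ j)
    (Finset.mem_univ j') hj'.symm).trans habs
  rw [hone j hj, hone j' hr] at this
  norm_num at this

section EuclideanMatrix

variable {n : Type*} [Fintype n] [DecidableEq n]

lemma toEuclideanLin_apply_apply {𝕜 m : Type*} [RCLike 𝕜] (M : Matrix m n 𝕜)
    (x : EuclideanSpace 𝕜 n) (k : m) : toEuclideanLin M x k = ∑ j, M k j * x j := by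
  simp [Matrix.ofLp_toLpLin, mulVec, dotProduct]

lemma norm_toEuclideanLin {P : Matrix n n ℝ} (hP : P ∈ orthogonalGroup n ℝ)
    (x : EuclideanSpace ℝ n) : ‖toEuclideanLin P x‖ = ‖x‖ :=
  ContinuousLinearMap.norm_map_of_mem_unitary
    (Unitary.map_mem (toEuclideanCLM (n := n) (𝕜 := ℝ)) (show P ∈ unitary _ from hP)) x

lemma lipschitzWith_smul_toEuclideanLin_add {P : Matrix n n ℝ} (hP : P ∈ orthogonalGroup n ℝ)
    {c : ℝ} (hc : 0 ≤ c) (v : EuclideanSpace ℝ n) :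
    LipschitzWith (⟨c, hc⟩ : ℝ≥0) fun x => c • toEuclideanLin P x + v :=
  LipschitzWith.of_dist_le_mul fun x y => le_of_eq <| by
    simp only [dist_eq_norm, add_sub_add_right_eq_sub, ← smul_sub, ← map_sub, norm_smul,
      norm_toEuclideanLin hP, Real.norm_of_nonneg hc]
    rfl

end EuclideanMatrix

lemma mem_smul_C0_iff {a : ℝ} (ha : 0 < a) {x : E3} : x ∈ a • C0 ↔ ∀ j, |x j| ≤ a := by
  simp only [mem_smul_set_iff_inv_smul_mem₀ ha.ne', C0, mem_ofPred_eq, mem_Icc, ← abs_le,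
    PiLp.smul_apply, smul_eq_mul, abs_mul, abs_inv, abs_of_pos ha, inv_mul_le_iff₀ ha, mul_one]

lemma isCompact_C0 : IsCompact C0 := by
  have : C0 = WithLp.toLp 2 '' univ.pi fun _ => Icc (-1 : ℝ) 1 := by
    ext x
    exact ⟨fun hx => ⟨WithLp.ofLp x, fun j _ => hx j, rfl⟩,
      by rintro ⟨y, hy, rfl⟩ j; exact hy j trivial⟩
  rw [this]
  exact (isCompact_univ_pi fun _ => isCompact_Icc).image (PiLp.continuous_toLp 2 _)

lemma cubeImage_one_zero (a : ℝ) : cubeImage a 1 0 = a • C0 := by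
  simp [cubeImage, ← image_smul]

lemma sum_abs_le_one_of_mapsTo_C0 {P : Matrix (Fin 3) (Fin 3) ℝ}
    (hPC : MapsTo (toEuclideanLin P) C0 C0) (k : Fin 3) : ∑ j, |P k j| ≤ 1 := by
  set s : E3 := WithLp.toLp 2 fun j => (SignType.sign (P k j) : ℝ)
  have hs : s ∈ C0 := fun j => by
    rcases lt_trichotomy (P k j) 0 with h | h | h <;> simp [s, h]
  simpa [s, toEuclideanLin_apply_apply, mulVec, dotProduct] using (hPC hs k).2

/-- An orthogonal matrix mapping the cube `C₀` into itself is a signed permutation matrix. -/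
lemma exists_injective_forall_ne_eq_zero {P : Matrix (Fin 3) (Fin 3) ℝ}
    (hP : P ∈ orthogonalGroup (Fin 3) ℝ) (hPC : MapsTo (toEuclideanLin P) C0 C0) :
    ∃ e : Fin 3 → Fin 3, Function.Injective e ∧ ∀ k j, j ≠ e k → P k j = 0 := by
  have hPPt := (mem_orthogonalGroup_iff _ _).1 hP
  have hrow : ∀ k, ∑ j, P k j ^ 2 = 1 := fun k => by
    simpa [Matrix.mul_apply, sq] using congr_fun₂ hPPt k k
  choose e he hzero using fun k =>
    exists_abs_eq_one_of_sum_abs_le_one (sum_abs_le_one_of_mapsTo_C0 hPC k) (hrow k)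
  refine ⟨e, fun k k' hkk' => by_contra fun hne => ?_, fun k j => hzero k j⟩
  have horth : P k (e k) * P k' (e k) = 0 := by
    have := congr_fun₂ hPPt k k'
    rwa [Matrix.mul_apply, Finset.sum_eq_single (e k) (fun j _ hj => by simp [hzero k j hj])
      (by simp), Matrix.one_apply_ne hne] at this
  rcases mul_eq_zero.1 horth with h | h
  · simpa [h] using he k
  · simpa [← hkk', h] using he k'

lemma toEuclideanLin_apply_of_forall_ne_eq_zero {P : Matrix (Fin 3) (Fin 3) ℝ} {e : Fin 3 → Fin 3}
    (hP : ∀ k j, j ≠ e k → P k j = 0) (x : E3) (k : Fin 3) :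
    toEuclideanLin P x k = P k (e k) * x (e k) := by
  rw [toEuclideanLin_apply_apply, Finset.sum_eq_single (e k) (fun j _ hj => by simp [hP k j hj])
    (by simp)]

lemma facePlane_one (i : Fin 3) : facePlane 1 i = (ℝ ∙ EuclideanSpace.single i (1 : ℝ))ᗮ := by
  rw [facePlane]
  apply le_antisymm
  · rw [Submodule.span_le]
    rintro _ ⟨j, hji, rfl⟩
    simp [Submodule.mem_orthogonal_singleton_iff_inner_right, EuclideanSpace.inner_single_left, hji]
  · intro x hx
    rw [Submodule.mem_orthogonal_singleton_iff_inner_right, EuclideanSpace.inner_single_left] at hx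
    rw [← (EuclideanSpace.basisFun (Fin 3) ℝ).sum_repr x]
    refine Submodule.sum_mem _ fun j _ => ?_
    rcases eq_or_ne j i with rfl | hji
    · simp_all
    · exact Submodule.smul_mem _ _ (Submodule.subset_span ⟨j, hji, by simp⟩)

abbrev coordProj (i : Fin 3) : E3 →L[ℝ] E3 := (facePlane 1 i).starProjection

lemma coordProj_apply (i : Fin 3) (x : E3) (k : Fin 3) :
    coordProj i x k = if k = i then 0 else x k := by
  simp only [coordProj, facePlane_one, Submodule.starProjection_orthogonal_val,
    Submodule.starProjection_singleton]
  by_cases hk : k = i <;> simp [EuclideanSpace.inner_single_left, hk]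

lemma coordProj_coordProj (i : Fin 3) (x : E3) : coordProj i (coordProj i x) = coordProj i x := by
  ext k
  simp only [coordProj_apply]
  split_ifs <;> rfl

lemma coordProj_image_subset_smul_C0 {a : ℝ} (ha : 0 < a) (m : Fin 3) :
    coordProj m '' (a • C0) ⊆ a • C0 := by
  rintro _ ⟨x, hx, rfl⟩
  rw [mem_smul_C0_iff ha] at hx ⊢
  intro j
  rw [coordProj_apply]
  split_ifs
  · simpa using ha.le
  · exact hx j

section SignedPermutation

variable {P : Matrix (Fin 3) (Fin 3) ℝ} {e : Fin 3 → Fin 3}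

lemma coordProj_toEuclideanLin (he : Function.Injective e) (hP : ∀ k j, j ≠ e k → P k j = 0)
    (m : Fin 3) (x : E3) :
    coordProj m (toEuclideanLin P x) = toEuclideanLin P (coordProj (e m) x) := by
  ext k
  simp only [coordProj_apply, toEuclideanLin_apply_of_forall_ne_eq_zero hP, he.eq_iff]
  split_ifs <;> simp

lemma coordProj_image_eq_image_coordProj (he : Function.Injective e)
    (hP : ∀ k j, j ≠ e k → P k j = 0) {Q : Set E3} (hPQ : toEuclideanLin P '' Q = Q) (m : Fin 3) :
    coordProj m '' Q = toEuclideanLin P '' (coordProj (e m) '' Q) := by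
  conv_lhs => rw [← hPQ]
  simp only [image_image, coordProj_toEuclideanLin he hP]

end SignedPermutation

lemma abs_vtx (k : Fin 4) (j : Fin 3) : |vtx k j| = 1 := by
  fin_cases k <;> fin_cases j <;> simp [vtx]

lemma exists_vtx_mul_nonneg (i : Fin 3) (x : E3) : ∃ k, ∀ j ≠ i, 0 ≤ vtx k j * x j := by
  rcases le_total 0 (x 0) with h0 | h0 <;> rcases le_total 0 (x 1) with h1 | h1 <;>
    rcases le_total 0 (x 2) with h2 | h2 <;> fin_cases i <;>
    first
    | (refine ⟨0, fun j hj => ?_⟩; fin_cases j <;> simp_all [vtx] <;> done)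
    | (refine ⟨1, fun j hj => ?_⟩; fin_cases j <;> simp_all [vtx] <;> done)
    | (refine ⟨2, fun j hj => ?_⟩; fin_cases j <;> simp_all [vtx] <;> done)
    | (refine ⟨3, fun j hj => ?_⟩; fin_cases j <;> simp_all [vtx])

section Attractor

variable {c : ℝ}

lemma smul_add_mem_smul_C0 (hc0 : 0 ≤ c) (hc1 : c < 1) {y v : E3} (hy : y ∈ (1 / (1 - c)) • C0)
    (hv : ∀ j, |v j| ≤ 1) : c • y + v ∈ (1 / (1 - c)) • C0 := by
  have ha : 0 < 1 / (1 - c) := one_div_pos.2 (sub_pos.2 hc1)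
  rw [mem_smul_C0_iff ha] at hy ⊢
  intro j
  calc |c * y j + v j| ≤ |c * y j| + |v j| := abs_add_le _ _
    _ ≤ c * (1 / (1 - c)) + 1 := by
        rw [abs_mul, abs_of_nonneg hc0]
        gcongr
        exacts [hy j, hv j]
    _ = 1 / (1 - c) := by field_simp [(sub_pos.2 hc1).ne']; ring

lemma exists_smul_add_coordProj_vtx_eq (hc : 1 / 2 ≤ c) (hc1 : c < 1) (m : Fin 3) {z : E3}
    (hz : z ∈ coordProj m '' ((1 / (1 - c)) • C0)) :
    ∃ k, ∃ y ∈ coordProj m '' ((1 / (1 - c)) • C0), c • y + coordProj m (vtx k) = z := by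
  obtain ⟨x, hx, rfl⟩ := hz
  obtain ⟨k, hk⟩ := exists_vtx_mul_nonneg m x
  have hc0 : 0 < c := by linarith
  set a := 1 / (1 - c)
  have ha : 0 < a := one_div_pos.2 (sub_pos.2 hc1)
  have hca : c * a + 1 = a := by simp only [a]; field_simp [(sub_pos.2 hc1).ne']; ring
  have hca1 : 1 ≤ c * a := by
    rw [← sub_nonneg, show c * a - 1 = (2 * c - 1) * a by linarith]
    exact mul_nonneg (by linarith) ha.le
  have hy : c⁻¹ • coordProj m (x - vtx k) ∈ a • C0 := by
    rw [mem_smul_C0_iff ha] at hx ⊢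
    intro j
    rw [PiLp.smul_apply, coordProj_apply]
    split_ifs with hj
    · simpa using ha.le
    · rw [smul_eq_mul, abs_mul, abs_inv, abs_of_pos hc0, inv_mul_le_iff₀ hc0, PiLp.sub_apply,
        abs_le]
      have hxj := abs_le.1 (hx j)
      rcases abs_eq zero_le_one |>.1 (abs_vtx k j) with hv | hv <;>
        have := hk j hj <;> rw [hv] at this ⊢ <;> constructor <;> nlinarith
  refine ⟨k, c⁻¹ • coordProj m (x - vtx k), ⟨_, hy, ?_⟩, ?_⟩
  · rw [map_smul, coordProj_coordProj]
  · rw [smul_inv_smul₀ hc0.ne', map_sub, sub_add_cancel]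

variable {P : Matrix (Fin 3) (Fin 3) ℝ} {A : Set E3}

lemma IsAttractor.exists_fmap_eq (hA : IsAttractor c P A) {x : E3} (hx : x ∈ A) :
    ∃ k, ∃ y ∈ A, fmap c P k y = x := by
  rw [hA.2.2] at hx
  simpa using hx

lemma IsAttractor.mapsTo_fmap (hA : IsAttractor c P A) (k : Fin 4) : MapsTo (fmap c P k) A A :=
  fun x hx => by
    rw [hA.2.2]
    exact mem_iUnion_of_mem k (mem_image_of_mem _ hx)

lemma IsAttractor.subset_smul_C0 (hA : IsAttractor c P A) (hP : P ∈ orthogonalGroup (Fin 3) ℝ)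
    (hPC : toEuclideanLin P '' C0 = C0) (hc0 : 0 ≤ c) (hc1 : c < 1) :
    A ⊆ (1 / (1 - c)) • C0 := by
  have hQ : IsCompact ((1 / (1 - c)) • C0) := isCompact_C0.smul _
  have hPQ : toEuclideanLin P '' ((1 / (1 - c)) • C0) = (1 / (1 - c)) • C0 := by
    rw [image_smul_set, hPC]
  refine subset_of_contracting_cover (ι := Unit) (S := fun _ => A) (K := ⟨c, hc0⟩) hc1
    (fun _ => hQ.isClosed) (fun _ => ⟨0, zero_mem_smul_set fun j => by simp⟩)
    (by simpa using hA.2.1.isBounded.union hQ.isBounded) ?_ ()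
  intro _ x hx
  obtain ⟨k, y, hy, rfl⟩ := hA.exists_fmap_eq hx
  exact ⟨(), y, hy, fmap c P k, lipschitzWith_smul_toEuclideanLin_add hP hc0 (vtx k),
    fun q hq => smul_add_mem_smul_C0 hc0 hc1 (hPQ ▸ mem_image_of_mem _ hq)
      fun j => (abs_vtx k j).le, rfl⟩

lemma IsAttractor.coordProj_image_eq (hA : IsAttractor c P A)
    (hP : P ∈ orthogonalGroup (Fin 3) ℝ) (hPC : toEuclideanLin P '' C0 = C0)
    (hc : c ∈ Ico (1 / 2 : ℝ) 1) (m : Fin 3) :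
    coordProj m '' A = coordProj m '' ((1 / (1 - c)) • C0) := by
  obtain ⟨hc₁, hc₂⟩ := hc
  have hc0 : 0 ≤ c := by linarith
  have ha : 0 < 1 / (1 - c) := one_div_pos.2 (sub_pos.2 hc₂)
  have hAQ := hA.subset_smul_C0 hP hPC hc0 hc₂
  obtain ⟨e, he, hPe⟩ := exists_injective_forall_ne_eq_zero hP
    fun _ hx => hPC ▸ mem_image_of_mem _ hx
  have hQ : IsCompact ((1 / (1 - c)) • C0) := isCompact_C0.smul _
  have hPQ : toEuclideanLin P '' ((1 / (1 - c)) • C0) = (1 / (1 - c)) • C0 := by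
    rw [image_smul_set, hPC]
  refine (image_mono hAQ).antisymm (subset_of_contracting_cover (K := ⟨c, hc0⟩) hc₂
    (fun m => (hA.2.1.image (coordProj m).continuous).isClosed) (fun m => hA.1.image _)
    (hQ.isBounded.subset (iUnion_subset fun m => union_subset (coordProj_image_subset_smul_C0 ha m)
      ((image_mono hAQ).trans (coordProj_image_subset_smul_C0 ha m)))) ?_ m)
  intro m z hz
  obtain ⟨k, y, hy, rfl⟩ := exists_smul_add_coordProj_vtx_eq hc₁ hc₂ m hz
  rw [coordProj_image_eq_image_coordProj he hPe hPQ] at hy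
  obtain ⟨z', hz', rfl⟩ := hy
  refine ⟨e m, z', hz', _, lipschitzWith_smul_toEuclideanLin_add hP hc0 _, ?_, rfl⟩
  rintro _ ⟨x, hx, rfl⟩
  refine ⟨fmap c P k x, hA.mapsTo_fmap k hx, ?_⟩
  simp only [fmap, map_add, map_smul, coordProj_toEuclideanLin he hPe]

end Attractor

lemma image_orthogonalProjectionOnto_eq_iff {E : Type*} [NormedAddCommGroup E]
    [InnerProductSpace ℝ E] (K : Submodule ℝ E) [K.HasOrthogonalProjection] (s t : Set E) :
    K.orthogonalProjectionOnto '' s = K.orthogonalProjectionOnto '' t ↔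
      K.starProjection '' s = K.starProjection '' t := by
  rw [← (image_injective.2 Subtype.val_injective).eq_iff, image_image, image_image]
  rfl

theorem attractor_isImaginaryCube (c : ℝ) (hc : c ∈ Set.Ico (1 / 2 : ℝ) 1)
    (P : Matrix (Fin 3) (Fin 3) ℝ) (hP : P ∈ Matrix.specialOrthogonalGroup (Fin 3) ℝ)
    (hPC : Matrix.toEuclideanLin P '' C0 = C0)
    (A : Set E3) (hA : IsAttractor c P A) :
    IsImaginaryCubeOf A ((1 / (1 - c)) • C0) := by
  refine ⟨1 / (1 - c), 1, 0, one_div_pos.2 (sub_pos.2 hc.2), one_mem _,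
    (cubeImage_one_zero _).symm, fun i => ?_⟩
  rw [cubeImage_one_zero]
  exact (image_orthogonalProjectionOnto_eq_iff _ _ _).2 (hA.coordProj_image_eq hP.1 hPC hc i)
end
end

section
/- Let A = A(c,P) be contained in a cube C, and suppose a, b ∈ A lie on two parallel faces S and T of C respectively. Then a and b cannot lie in the same piece: there exist i ≠ j in {1,2,3,4} with a ∈ A_i and b ∈ A_j. -/
/-!
Let `u = Q eₖ` be the unit normal of the faces `S` and `T`. On the cube, `⟪u, ·⟫` ranges over
`[⟪u, w⟫ - a, ⟪u, w⟫ + a]`, and its two extreme values are taken on `S` and on `T`. If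
`p = fᵢ x` and `q = fᵢ y` were in the same piece, then for every `l` the points
`f_l x = p + (v_l - vᵢ)` and `f_l y = q + (v_l - vᵢ)` lie in `A ⊆ C`, so `⟪u, v_l - vᵢ⟫` is both
`≤ 0` and `≥ 0`. Hence `u` is orthogonal to all `v_l - vᵢ`, which span `ℝ³`, so `u = 0`.
-/

noncomputable section
open Matrix

/-- The face of the cube `a Q C₀ + w` in coordinate direction `k` with sign `σ`. -/
def cubeFace (a : ℝ) (Q : Matrix (Fin 3) (Fin 3) ℝ) (w : E3) (k : Fin 3) (σ : ℝ) : Set E3 :=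
  (fun x => a • Matrix.toEuclideanLin Q x + w) '' {x ∈ C0 | x k = σ}

open scoped InnerProductSpace

theorem Matrix.inner_toEuclideanLin_of_mem_unitaryGroup {𝕜 n : Type*} [RCLike 𝕜] [Fintype n]
    [DecidableEq n] {U : Matrix n n 𝕜} (hU : U ∈ Matrix.unitaryGroup n 𝕜)
    (x y : EuclideanSpace 𝕜 n) :
    ⟪toEuclideanLin U x, toEuclideanLin U y⟫_𝕜 = ⟪x, y⟫_𝕜 := by
  rw [← LinearMap.adjoint_inner_right, ← toEuclideanLin_conjTranspose_eq_adjoint]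
  simp [toLpLin_apply, mulVec_mulVec, ← star_eq_conjTranspose, mem_unitaryGroup_iff'.mp hU]

/-- The differences `vtx l - vtx i` span `ℝ³`. -/
theorem eq_zero_of_forall_inner_vtx_eq {u : E3} {i : Fin 4} (h : ∀ l, ⟪u, vtx l⟫_ℝ = ⟪u, vtx i⟫_ℝ) :
    u = 0 := by
  have h01 := (h 0).trans (h 1).symm
  have h02 := (h 0).trans (h 2).symm
  have h03 := (h 0).trans (h 3).symm
  simp only [vtx, PiLp.inner_apply, Fin.sum_univ_three] at h01 h02 h03
  ext m
  fin_cases m <;> simp at h01 h02 h03 ⊢ <;> linarith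

def cubeAxis (Q : Matrix (Fin 3) (Fin 3) ℝ) (k : Fin 3) : E3 :=
  toEuclideanLin Q (EuclideanSpace.single k 1)

section cubeAxis

variable {Q : Matrix (Fin 3) (Fin 3) ℝ} (hQ : Q ∈ orthogonalGroup (Fin 3) ℝ) {k : Fin 3}
include hQ

theorem cubeAxis_ne_zero : cubeAxis Q k ≠ 0 := by
  intro h
  have := inner_toEuclideanLin_of_mem_unitaryGroup hQ (EuclideanSpace.single k 1)
    (EuclideanSpace.single k (1 : ℝ))
  rw [← cubeAxis, h] at this
  simp at this

theorem inner_cubeAxis_smul_add (a : ℝ) (u w : E3) :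
    ⟪cubeAxis Q k, a • toEuclideanLin Q u + w⟫_ℝ = a * u k + ⟪cubeAxis Q k, w⟫_ℝ := by
  rw [inner_add_right, inner_smul_right, cubeAxis, inner_toEuclideanLin_of_mem_unitaryGroup hQ,
    EuclideanSpace.inner_single_left]
  simp

theorem inner_cubeAxis_mem_Icc {a : ℝ} (ha : 0 ≤ a) {w z : E3} (hz : z ∈ cubeImage a Q w) :
    ⟪cubeAxis Q k, z⟫_ℝ ∈ Set.Icc (⟪cubeAxis Q k, w⟫_ℝ - a) (⟪cubeAxis Q k, w⟫_ℝ + a) := by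
  obtain ⟨u, hu, rfl⟩ := hz
  rw [inner_cubeAxis_smul_add hQ]
  constructor <;> nlinarith [(hu k).1, (hu k).2]

theorem inner_cubeAxis_of_mem_cubeFace {a σ : ℝ} {w z : E3} (hz : z ∈ cubeFace a Q w k σ) :
    ⟪cubeAxis Q k, z⟫_ℝ = ⟪cubeAxis Q k, w⟫_ℝ + a * σ := by
  obtain ⟨u, ⟨-, hu⟩, rfl⟩ := hz
  rw [inner_cubeAxis_smul_add hQ, hu, add_comm]

end cubeAxis

theorem inner_translation_eq_of_piece_meets_bounds {E ι : Type*} [NormedAddCommGroup E]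
    [InnerProductSpace ℝ E] {g : E → E} {v : ι → E} {A : Set E} {u : E} {m M : ℝ}
    (hbound : ∀ l, ∀ x ∈ A, ⟪u, g x + v l⟫_ℝ ∈ Set.Icc m M) {i : ι} {x y : E}
    (hx : x ∈ A) (hy : y ∈ A) (hmax : ⟪u, g x + v i⟫_ℝ = M) (hmin : ⟪u, g y + v i⟫_ℝ = m)
    (l : ι) : ⟪u, v l⟫_ℝ = ⟪u, v i⟫_ℝ := by
  have hxl := (hbound l x hx).2
  have hyl := (hbound l y hy).1
  rw [inner_add_right] at hmax hmin hxl hyl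
  linarith

namespace IsAttractor

variable {c : ℝ} {P : Matrix (Fin 3) (Fin 3) ℝ} {A : Set E3} (hA : IsAttractor c P A)
include hA

theorem exists_mem_piece {z : E3} (hz : z ∈ A) : ∃ i, z ∈ fmap c P i '' A := by
  rw [hA.2.2] at hz
  exact Set.mem_iUnion.mp hz

theorem fmap_mem (l : Fin 4) {x : E3} (hx : x ∈ A) : fmap c P l x ∈ A := by
  rw [hA.2.2]
  exact Set.mem_iUnion.mpr ⟨l, x, hx, rfl⟩

end IsAttractor

theorem parallel_faces_different_pieces_general (c : ℝ)
    (P : Matrix (Fin 3) (Fin 3) ℝ)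
    (A : Set E3) (hA : IsAttractor c P A)
    (a : ℝ) (Q : Matrix (Fin 3) (Fin 3) ℝ) (w : E3)
    (ha : 0 < a) (hQ : Q ∈ Matrix.specialOrthogonalGroup (Fin 3) ℝ)
    (hsub : A ⊆ cubeImage a Q w)
    (p q : E3) (hp : p ∈ A) (hq : q ∈ A)
    (k : Fin 3) (σ τ : ℝ) (hσ : σ = 1 ∨ σ = -1) (hτ : τ = 1 ∨ τ = -1) (hστ : σ ≠ τ)
    (hpS : p ∈ cubeFace a Q w k σ) (hqT : q ∈ cubeFace a Q w k τ) :
    ∃ i j : Fin 4, i ≠ j ∧ p ∈ fmap c P i '' A ∧ q ∈ fmap c P j '' A := by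
  obtain ⟨i, hpi⟩ := hA.exists_mem_piece hp
  obtain ⟨j, hqj⟩ := hA.exists_mem_piece hq
  refine ⟨i, j, ?_, hpi, hqj⟩
  rintro rfl
  obtain ⟨x, hx, rfl⟩ := hpi
  obtain ⟨y, hy, rfl⟩ := hqj
  have hQorth := (mem_specialOrthogonalGroup_iff.mp hQ).1
  have hbound : ∀ l, ∀ z ∈ A, ⟪cubeAxis Q k, fmap c P l z⟫_ℝ ∈
      Set.Icc (⟪cubeAxis Q k, w⟫_ℝ - a) (⟪cubeAxis Q k, w⟫_ℝ + a) := fun l z hz =>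
    inner_cubeAxis_mem_Icc hQorth ha.le (hsub (hA.fmap_mem l hz))
  have hp_face := inner_cubeAxis_of_mem_cubeFace hQorth hpS
  have hq_face := inner_cubeAxis_of_mem_cubeFace hQorth hqT
  have hvtx : ∀ l, ⟪cubeAxis Q k, vtx l⟫_ℝ = ⟪cubeAxis Q k, vtx i⟫_ℝ := by
    rcases hσ with rfl | rfl <;> rcases hτ with rfl | rfl <;>
      simp only [mul_one, mul_neg, ← sub_eq_add_neg] at hp_face hq_face <;> norm_num at hστ
    · exact inner_translation_eq_of_piece_meets_bounds hbound hx hy hp_face hq_face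
    · exact inner_translation_eq_of_piece_meets_bounds hbound hy hx hq_face hp_face
  exact cubeAxis_ne_zero hQorth (eq_zero_of_forall_inner_vtx_eq hvtx)

theorem parallel_faces_different_pieces (c : ℝ) (hc : c ∈ Set.Ioo (0 : ℝ) 1)
    (P : Matrix (Fin 3) (Fin 3) ℝ) (hP : P ∈ Matrix.specialOrthogonalGroup (Fin 3) ℝ)
    (A : Set E3) (hA : IsAttractor c P A)
    (a : ℝ) (Q : Matrix (Fin 3) (Fin 3) ℝ) (w : E3)
    (ha : 0 < a) (hQ : Q ∈ Matrix.specialOrthogonalGroup (Fin 3) ℝ)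
    (hsub : A ⊆ cubeImage a Q w)
    (p q : E3) (hp : p ∈ A) (hq : q ∈ A)
    (k : Fin 3) (σ τ : ℝ) (hσ : σ = 1 ∨ σ = -1) (hτ : τ = 1 ∨ τ = -1) (hστ : σ ≠ τ)
    (hpS : p ∈ cubeFace a Q w k σ) (hqT : q ∈ cubeFace a Q w k τ) :
    ∃ i j : Fin 4, i ≠ j ∧ p ∈ fmap c P i '' A ∧ q ∈ fmap c P j '' A :=
  parallel_faces_different_pieces_general c P A hA a Q w ha hQ hsub p q hp hq k σ τ hσ hτ hστ hpS
    hqT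
end
end
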